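/- arXiv:0805.2981 — 2 statements merged into one kernel-verified Lean document; each statement's English description precedes it below -/
import Mathlib

section
/- Let K be a field and L a finite-dimensional Lie algebra over K with basis X_1, …, X_n and structure constants C_{ij}^k, such that span(X_1, …, X_s) is a Lie subalgebra S and M := span(X_{s+1}, …, X_n) satisfies [S, M] ⊆ M; let C'_{ij}^k be the structure constants of the associated Inönü–Wigner contraction g. Let F ∈ K[x_1, …, x_n] be a homogeneous polynomial of degree p with D_iF = 0 for all 1 ≤ i ≤ n (a Casimir invariant of L), and let M* be the largest b such that the bihomogeneous component F_{(p−b,b)} of F is nonzero. Then the top component F_{(p−M*,M*)} is an invariant of the contraction: D'_iF_{(p−M*,M*)} = 0 for all 1 ≤ i ≤ n. -/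
/-! Grade `K[x_1, …, x_n]` by the degree in the variables of `M`; the term `x_k ∂/∂x_j` of a
coadjoint vector field shifts it by `[k > s] - [j > s]`. The reduction-chain conditions show that
for each `i` all terms of `D'_i` shift this degree by the same `δ ∈ {0, 1}` (`δ = 0` for `i ≤ s`,
where `D'_i = D_i`, and `δ = 1` for `i > s`), while the terms of `D_i - D'_i` shift it by less.
As every monomial of `F` has `M`-degree at most `M*`, the component of `D_i F = 0` of `M`-degree
`M* + δ` is `D'_i F_{(p-M*,M*)}`. -/

/-- The coadjoint vector field `D_i = Σ_{j,k} C_{ij}^k x_k ∂/∂x_j` associated with the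
structure constants `C`, acting on the polynomial ring `K[x_1, …, x_n]`. -/
noncomputable def coadD {K : Type*} [Field K] {n : ℕ}
    (C : Fin n → Fin n → Fin n → K) (i : Fin n) :
    MvPolynomial (Fin n) K → MvPolynomial (Fin n) K :=
  fun F => ∑ j, ∑ k, C i j k • (MvPolynomial.X k * MvPolynomial.pderiv j F)

/-- Degree of a monomial exponent in the subalgebra variables `x_1, …, x_s`. -/
def degS {n : ℕ} (s : ℕ) (d : Fin n →₀ ℕ) : ℕ :=
  ∑ i ∈ Finset.univ.filter (fun i : Fin n => (i : ℕ) < s), d i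

/-- Degree of a monomial exponent in the complementary variables `x_{s+1}, …, x_n`. -/
def degM {n : ℕ} (s : ℕ) (d : Fin n →₀ ℕ) : ℕ :=
  ∑ i ∈ Finset.univ.filter (fun i : Fin n => s ≤ (i : ℕ)), d i

/-- The bihomogeneous component of bidegree `(a, b)` of a polynomial `F`. -/
noncomputable def bihomComp {K : Type*} [Field K] {n : ℕ} (s a b : ℕ)
    (F : MvPolynomial (Fin n) K) : MvPolynomial (Fin n) K :=
  ∑ d ∈ F.support.filter (fun d => degS s d = a ∧ degM s d = b),
    MvPolynomial.monomial d (F.coeff d)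

open MvPolynomial

theorem weight_lt_of_weightedHomogeneousComponent_eq_zero {R σ : Type*} [CommSemiring R]
    {w : σ → ℕ} {F : MvPolynomial σ R} {N : ℕ}
    (hF : ∀ q, N < q → weightedHomogeneousComponent w q F = 0) :
    ∀ e ∈ F.support, Finsupp.weight w e < N + 1 := by
  intro e he
  by_contra! h
  have := congr_arg (coeff e) (hF _ h)
  rw [coeff_weightedHomogeneousComponent, if_pos rfl, coeff_zero] at this
  exact mem_support_iff.mp he this

def weightM {n : ℕ} (s : ℕ) (j : Fin n) : ℕ := if s ≤ (j : ℕ) then 1 else 0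

section Bigrading

variable {n : ℕ} (s : ℕ)

theorem degM_eq_weight (d : Fin n →₀ ℕ) : degM s d = Finsupp.weight (weightM s) d := by
  simp [degM, weightM, Finsupp.weight_eq_sum, Finset.sum_filter]

theorem degS_add_degM (d : Fin n →₀ ℕ) : degS s d + degM s d = Finsupp.weight 1 d := by
  simp only [degS, degM, Finsupp.weight_eq_sum, Pi.one_apply, smul_eq_mul, mul_one, ← not_lt]
  exact Finset.sum_filter_add_sum_filter_not _ _ _

theorem bihomComp_sub_eq_weightedHomogeneousComponent {K : Type*} [Field K]
    {F : MvPolynomial (Fin n) K} {p : ℕ} (hF : F.IsHomogeneous p) (q : ℕ) :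
    bihomComp s (p - q) q F = weightedHomogeneousComponent (weightM s) q F := by
  classical
  rw [weightedHomogeneousComponent_apply, bihomComp]
  refine Finset.sum_congr (Finset.filter_congr fun d hd => ?_) fun _ _ => rfl
  have := degS_add_degM s d
  rw [hF (mem_support_iff.mp hd), degM_eq_weight] at this
  rw [degM_eq_weight]
  omega

end Bigrading

section CoadjointVectorFields

variable {K : Type*} [Field K] {n : ℕ} (C : Fin n → Fin n → Fin n → K) (i : Fin n)

theorem coadD_add (P Q : MvPolynomial (Fin n) K) :
    coadD C i (P + Q) = coadD C i P + coadD C i Q := by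
  simp only [coadD, map_add, mul_add, smul_add, Finset.sum_add_distrib]

theorem coadD_eq_add_coadD_sub (C₁ : Fin n → Fin n → Fin n → K) (P : MvPolynomial (Fin n) K) :
    coadD C i P = coadD C₁ i P + coadD (C - C₁) i P := by
  simp only [coadD, Pi.sub_apply, sub_smul, Finset.sum_sub_distrib, add_sub_cancel]

theorem exists_weight_add_eq_of_mem_support_coadD (w : Fin n → ℕ)
    {P : MvPolynomial (Fin n) K} {d : Fin n →₀ ℕ} (hd : d ∈ (coadD C i P).support) :
    ∃ j k, C i j k ≠ 0 ∧ ∃ e ∈ P.support, Finsupp.weight w d + w j = w k + Finsupp.weight w e := by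
  classical
  obtain ⟨j, -, hd⟩ := Finset.mem_biUnion.mp (support_sum hd)
  obtain ⟨k, -, hd⟩ := Finset.mem_biUnion.mp (support_sum hd)
  have hC : C i j k ≠ 0 := by rintro h; simp [h] at hd
  obtain ⟨d', hd', rfl⟩ : ∃ d' ∈ (pderiv j P).support, Finsupp.single k 1 + d' = d := by
    simpa [support_X_mul] using support_smul hd
  refine ⟨j, k, hC, d' + Finsupp.single j 1, ?_, ?_⟩
  · rw [mem_support_iff, coeff_pderiv] at hd'
    exact mem_support_iff.mpr (left_ne_zero_of_mul hd')
  · simp only [map_add, Finsupp.weight_single, one_smul]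
    ring

variable {C i} {w : Fin n → ℕ} {δ : ℕ}

theorem isWeightedHomogeneous_coadD (hC : ∀ j k, C i j k ≠ 0 → w k = w j + δ)
    {P : MvPolynomial (Fin n) K} {m : ℕ} (hP : P.IsWeightedHomogeneous w m) :
    (coadD C i P).IsWeightedHomogeneous w (m + δ) := by
  intro d hd
  obtain ⟨j, k, hjk, e, he, hde⟩ :=
    exists_weight_add_eq_of_mem_support_coadD C i w (mem_support_iff.mpr hd)
  have := hP (mem_support_iff.mp he)
  have := hC j k hjk
  omega

theorem weight_lt_of_mem_support_coadD (hC : ∀ j k, C i j k ≠ 0 → w k < w j + δ)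
    {P : MvPolynomial (Fin n) K} {N : ℕ} (hP : ∀ e ∈ P.support, Finsupp.weight w e < N + 1) :
    ∀ d ∈ (coadD C i P).support, Finsupp.weight w d < N + δ := by
  intro d hd
  obtain ⟨j, k, hjk, e, he, hde⟩ := exists_weight_add_eq_of_mem_support_coadD C i w hd
  have := hP e he
  have := hC j k hjk
  omega

theorem weightedHomogeneousComponent_coadD (hC : ∀ j k, C i j k ≠ 0 → w k = w j + δ)
    (P : MvPolynomial (Fin n) K) (N : ℕ) :
    weightedHomogeneousComponent w (N + δ) (coadD C i P) =
      coadD C i (weightedHomogeneousComponent w N P) := by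
  classical
  set T := weightedHomogeneousComponent w N P
  have hR : ∀ e ∈ (P - T).support, Finsupp.weight w e ≠ N := by
    intro e he hN
    simp [T, coeff_weightedHomogeneousComponent, hN] at he
  have hRD : weightedHomogeneousComponent w (N + δ) (coadD C i (P - T)) = 0 := by
    refine weightedHomogeneousComponent_eq_zero' _ _ fun d hd hdN => ?_
    obtain ⟨j, k, hjk, e, he, hde⟩ := exists_weight_add_eq_of_mem_support_coadD C i w hd
    have := hC j k hjk
    exact hR e he (by omega)
  rw [← add_sub_cancel T P, coadD_add, map_add, hRD, add_zero]
  exact (isWeightedHomogeneous_coadD hC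
    (weightedHomogeneousComponent_isWeightedHomogeneous N P)).weightedHomogeneousComponent_same

theorem weightedHomogeneousComponent_coadD_of_sub {C₁ : Fin n → Fin n → Fin n → K}
    (h₁ : ∀ j k, C₁ i j k ≠ 0 → w k = w j + δ)
    (h₂ : ∀ j k, C i j k - C₁ i j k ≠ 0 → w k < w j + δ)
    {P : MvPolynomial (Fin n) K} {N : ℕ} (hP : ∀ e ∈ P.support, Finsupp.weight w e < N + 1) :
    weightedHomogeneousComponent w (N + δ) (coadD C i P) =
      coadD C₁ i (weightedHomogeneousComponent w N P) := by
  rw [coadD_eq_add_coadD_sub C i C₁, map_add, weightedHomogeneousComponent_coadD h₁,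
    weightedHomogeneousComponent_eq_zero' _ _ fun d hd =>
      (weight_lt_of_mem_support_coadD h₂ hP d hd).ne, add_zero]

end CoadjointVectorFields

section StructureConstants

variable {K : Type*} [Field K] {L : Type*} [LieRing L] [LieAlgebra K L] {n : ℕ}
  {b : Module.Basis (Fin n) K L} {C : Fin n → Fin n → Fin n → K}

theorem structConst_eq_repr (hC : ∀ i j, ⁅b i, b j⁆ = ∑ k, C i j k • b k) (i j k : Fin n) :
    C i j k = b.repr ⁅b i, b j⁆ k := by
  simp [hC, Finsupp.single_apply]

theorem structConst_antisymm (hC : ∀ i j, ⁅b i, b j⁆ = ∑ k, C i j k • b k) (i j k : Fin n) :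
    C j i k = -C i j k := by
  rw [structConst_eq_repr hC, structConst_eq_repr hC, ← lie_skew, map_neg, Finsupp.neg_apply]

theorem mem_of_structConst_ne_zero (hC : ∀ i j, ⁅b i, b j⁆ = ∑ k, C i j k • b k)
    {T : Set (Fin n)} {i j k : Fin n} (hij : ⁅b i, b j⁆ ∈ Submodule.span K (b '' T))
    (hk : C i j k ≠ 0) : k ∈ T :=
  b.mem_span_image.mp hij <| by
    rwa [Finset.mem_coe, Finsupp.mem_support_iff, ← structConst_eq_repr hC]

variable {s : ℕ}

theorem weightM_eq_of_structConst_ne_zero (hC : ∀ i j, ⁅b i, b j⁆ = ∑ k, C i j k • b k)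
    (hSsub : ∀ x ∈ Submodule.span K (⇑b '' {i : Fin n | (i : ℕ) < s}),
        ∀ y ∈ Submodule.span K (⇑b '' {i : Fin n | (i : ℕ) < s}),
        ⁅x, y⁆ ∈ Submodule.span K (⇑b '' {i : Fin n | (i : ℕ) < s}))
    (hSM : ∀ x ∈ Submodule.span K (⇑b '' {i : Fin n | (i : ℕ) < s}),
        ∀ m ∈ Submodule.span K (⇑b '' {i : Fin n | s ≤ (i : ℕ)}),
        ⁅x, m⁆ ∈ Submodule.span K (⇑b '' {i : Fin n | s ≤ (i : ℕ)}))
    {i j k : Fin n} (hi : (i : ℕ) < s) (hC0 : C i j k ≠ 0) : weightM s k = weightM s j := by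
  have hbi : b i ∈ Submodule.span K (⇑b '' {i : Fin n | (i : ℕ) < s}) :=
    Submodule.subset_span ⟨i, hi, rfl⟩
  by_cases hj : s ≤ (j : ℕ)
  · have hk : s ≤ (k : ℕ) :=
      mem_of_structConst_ne_zero hC (hSM _ hbi _ (Submodule.subset_span ⟨j, hj, rfl⟩)) hC0
    simp [weightM, hj, hk]
  · have hk : (k : ℕ) < s :=
      mem_of_structConst_ne_zero hC
        (hSsub _ hbi _ (Submodule.subset_span ⟨j, not_le.mp hj, rfl⟩)) hC0
    simp [weightM, hj, not_le.mpr hk]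

theorem weightM_eq_add_one_of_contraction (hC : ∀ i j, ⁅b i, b j⁆ = ∑ k, C i j k • b k)
    (hSM : ∀ x ∈ Submodule.span K (⇑b '' {i : Fin n | (i : ℕ) < s}),
        ∀ m ∈ Submodule.span K (⇑b '' {i : Fin n | s ≤ (i : ℕ)}),
        ⁅x, m⁆ ∈ Submodule.span K (⇑b '' {i : Fin n | s ≤ (i : ℕ)}))
    {C' : Fin n → Fin n → Fin n → K}
    (hC' : ∀ i j k, C' i j k = if s ≤ (i : ℕ) ∧ s ≤ (j : ℕ) then 0 else C i j k)
    {i j k : Fin n} (hi : s ≤ (i : ℕ)) (hC0 : C' i j k ≠ 0) :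
    weightM s k = weightM s j + 1 := by
  have hj : (j : ℕ) < s := by
    by_contra! hj
    simp [hC', hi, hj] at hC0
  have hji : C j i k ≠ 0 := by
    rw [structConst_antisymm hC, neg_ne_zero]
    simpa [hC', not_le.mpr hj] using hC0
  have hk : s ≤ (k : ℕ) := mem_of_structConst_ne_zero hC
    (hSM _ (Submodule.subset_span ⟨j, hj, rfl⟩) _ (Submodule.subset_span ⟨i, hi, rfl⟩)) hji
  simp [weightM, hk, not_le.mpr hj]

theorem exists_weightM_shift_of_contraction (hC : ∀ i j, ⁅b i, b j⁆ = ∑ k, C i j k • b k)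
    (hSsub : ∀ x ∈ Submodule.span K (⇑b '' {i : Fin n | (i : ℕ) < s}),
        ∀ y ∈ Submodule.span K (⇑b '' {i : Fin n | (i : ℕ) < s}),
        ⁅x, y⁆ ∈ Submodule.span K (⇑b '' {i : Fin n | (i : ℕ) < s}))
    (hSM : ∀ x ∈ Submodule.span K (⇑b '' {i : Fin n | (i : ℕ) < s}),
        ∀ m ∈ Submodule.span K (⇑b '' {i : Fin n | s ≤ (i : ℕ)}),
        ⁅x, m⁆ ∈ Submodule.span K (⇑b '' {i : Fin n | s ≤ (i : ℕ)}))
    {C' : Fin n → Fin n → Fin n → K}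
    (hC' : ∀ i j k, C' i j k = if s ≤ (i : ℕ) ∧ s ≤ (j : ℕ) then 0 else C i j k) (i : Fin n) :
    ∃ δ, (∀ j k, C' i j k ≠ 0 → weightM s k = weightM s j + δ) ∧
      ∀ j k, C i j k - C' i j k ≠ 0 → weightM s k < weightM s j + δ := by
  by_cases hi : s ≤ (i : ℕ)
  · refine ⟨1, fun j k => weightM_eq_add_one_of_contraction hC hSM hC' hi, fun j k h => ?_⟩
    have hj : s ≤ (j : ℕ) := by
      by_contra hj
      simp [hC', hj] at h
    unfold weightM
    split_ifs <;> omega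
  · refine ⟨0, fun j k h => ?_, fun j k h => by simp [hC', hi] at h⟩
    exact weightM_eq_of_structConst_ne_zero hC hSsub hSM (not_le.mp hi) (by simpa [hC', hi] using h)

end StructureConstants

theorem stmt6_general {K : Type*} [Field K] {L : Type*} [LieRing L] [LieAlgebra K L]
    {n s : ℕ} (b : Module.Basis (Fin n) K L)
    (C : Fin n → Fin n → Fin n → K)
    (hC : ∀ i j, ⁅b i, b j⁆ = ∑ k, C i j k • b k)
    (hSsub : ∀ x ∈ Submodule.span K (⇑b '' {i : Fin n | (i : ℕ) < s}),
        ∀ y ∈ Submodule.span K (⇑b '' {i : Fin n | (i : ℕ) < s}),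
        ⁅x, y⁆ ∈ Submodule.span K (⇑b '' {i : Fin n | (i : ℕ) < s}))
    (hSM : ∀ x ∈ Submodule.span K (⇑b '' {i : Fin n | (i : ℕ) < s}),
        ∀ m ∈ Submodule.span K (⇑b '' {i : Fin n | s ≤ (i : ℕ)}),
        ⁅x, m⁆ ∈ Submodule.span K (⇑b '' {i : Fin n | s ≤ (i : ℕ)}))
    (C' : Fin n → Fin n → Fin n → K)
    (hC' : ∀ i j k, C' i j k = if s ≤ (i : ℕ) ∧ s ≤ (j : ℕ) then 0 else C i j k)
    (F : MvPolynomial (Fin n) K) (p : ℕ)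
    (hFhom : F.IsHomogeneous p)
    (hFcas : ∀ i : Fin n, coadD C i F = 0)
    (Mstar : ℕ)
    (hMmax : ∀ q : ℕ, Mstar < q → bihomComp s (p - q) q F = 0) :
    ∀ i : Fin n, coadD C' i (bihomComp s (p - Mstar) Mstar F) = 0 := by
  have hcomp := bihomComp_sub_eq_weightedHomogeneousComponent s hFhom
  have hF := weight_lt_of_weightedHomogeneousComponent_eq_zero fun q hq => hcomp q ▸ hMmax q hq
  intro i
  obtain ⟨δ, hlead, hlower⟩ := exists_weightM_shift_of_contraction hC hSsub hSM hC' i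
  rw [hcomp, ← weightedHomogeneousComponent_coadD_of_sub hlead hlower hF, hFcas i, map_zero]

/-- Let `X_1, …, X_n` be a basis of a Lie algebra `L` adapted to a reduction
chain (`S = span(X_1, …, X_s)` a subalgebra, `M = span(X_{s+1}, …, X_n)` with `[S, M] ⊆ M`),
and let `C'` be the structure constants of the associated Inönü–Wigner contraction.  If `F` is
a Casimir invariant of `L`, homogeneous of degree `p`, and `M*` is the largest `b` such that
the bihomogeneous component `F_{(p−b,b)}` is nonzero, then the top component `F_{(p−M*,M*)}` is
an invariant of the contraction: `D'_i F_{(p−M*,M*)} = 0` for all `i`. -/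
theorem stmt6 {K : Type*} [Field K] {L : Type*} [LieRing L] [LieAlgebra K L]
    {n s : ℕ} (hsn : s ≤ n) (b : Module.Basis (Fin n) K L)
    (C : Fin n → Fin n → Fin n → K)
    (hC : ∀ i j, ⁅b i, b j⁆ = ∑ k, C i j k • b k)
    (hSsub : ∀ x ∈ Submodule.span K (⇑b '' {i : Fin n | (i : ℕ) < s}),
        ∀ y ∈ Submodule.span K (⇑b '' {i : Fin n | (i : ℕ) < s}),
        ⁅x, y⁆ ∈ Submodule.span K (⇑b '' {i : Fin n | (i : ℕ) < s}))
    (hSM : ∀ x ∈ Submodule.span K (⇑b '' {i : Fin n | (i : ℕ) < s}),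
        ∀ m ∈ Submodule.span K (⇑b '' {i : Fin n | s ≤ (i : ℕ)}),
        ⁅x, m⁆ ∈ Submodule.span K (⇑b '' {i : Fin n | s ≤ (i : ℕ)}))
    (C' : Fin n → Fin n → Fin n → K)
    (hC' : ∀ i j k, C' i j k = if s ≤ (i : ℕ) ∧ s ≤ (j : ℕ) then 0 else C i j k)
    (F : MvPolynomial (Fin n) K) (p : ℕ)
    (hFhom : F.IsHomogeneous p)
    (hFcas : ∀ i : Fin n, coadD C i F = 0)
    (Mstar : ℕ)
    (hMne : bihomComp s (p - Mstar) Mstar F ≠ 0)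
    (hMmax : ∀ q : ℕ, Mstar < q → bihomComp s (p - q) q F = 0) :
    ∀ i : Fin n, coadD C' i (bihomComp s (p - Mstar) Mstar F) = 0 :=
  stmt6_general b C hC hSsub hSM C' hC' F p hFhom hFcas Mstar hMmax
end

section
/- Let g be the 15-dimensional complex Lie algebra su(4) in the Wigner supermultiplet basis {S_i, T_j, Q_{iα} : 1 ≤ i, j, α ≤ 3} with nonzero brackets [S_i, S_j] = iε_{ijk}S_k, [T_i, T_j] = iε_{ijk}T_k, [S_i, Q_{jα}] = iε_{ijk}Q_{kα}, [T_α, Q_{iβ}] = iε_{αβγ}Q_{iγ}, [Q_{iα}, Q_{jβ}] = (i/4)(δ_{αβ}ε_{ijk}S_k + δ_{ij}ε_{αβγ}T_γ), and [S_i, T_j] = 0. Then in the universal enveloping algebra U(g), the symmetrized Moshinsky–Nagel operator Ω := Sym(Σ_{i,α} S_iT_αQ_{iα}) commutes with every S_i and every T_α; i.e. Ω is a missing label operator for the reduction su(4) ⊃ su(2) × su(2). -/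
/-- The Levi-Civita symbol `ε` on three indices, as a complex number. -/
noncomputable def eps3 (a b c : Fin 3) : ℂ :=
  ((((b.val : ℤ) - (a.val : ℤ)) * ((c.val : ℤ) - (b.val : ℤ))
      * ((c.val : ℤ) - (a.val : ℤ)) : ℤ) : ℂ) / 2

/-- The Kronecker delta, as a complex number. -/
noncomputable def kdelta (a b : Fin 3) : ℂ := if a = b then 1 else 0

/-- The symmetrization `Sym(abc) = (1/3!) Σ_{σ ∈ S_3} Y_{σ(1)}Y_{σ(2)}Y_{σ(3)}` of a cubic
monomial in the universal enveloping algebra. -/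
noncomputable def sym3 {g : Type*} [LieRing g] [LieAlgebra ℂ g] (a b c : g) :
    UniversalEnvelopingAlgebra ℂ g :=
  (6 : ℂ)⁻¹ • ∑ σ : Equiv.Perm (Fin 3),
    (List.ofFn fun i => UniversalEnvelopingAlgebra.ι ℂ (![a, b, c] (σ i))).prod


/-! `ad (ι x)` is a derivation of `U(g)`, and symmetrization intertwines it with the adjoint action
on the factors of a cubic monomial. Both `S_i` and `T_α` act on the spin indices (of `S_j`, `Q_{jβ}`)
and on the isospin indices (of `T_β`, `Q_{jβ}`) through antisymmetric matrices, namely `i ε_{ijk}`,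
`i ε_{αβγ}` or `0`. Since these indices are contracted in `Ω`, the two contributions of each
contracted pair cancel. -/

theorem eps3_swap_right (a b c : Fin 3) : eps3 a c b = -eps3 a b c := by
  simp only [eps3]
  push_cast
  ring

theorem sum_sum_smul_add_swap_eq_zero {R M n : Type*} [Ring R] [AddCommGroup M] [Module R M]
    [Fintype n] (c : n → n → R) (hc : ∀ j k, c k j = -c j k) (A : n → n → M) :
    ∑ j, ∑ k, c j k • (A k j + A j k) = 0 := by
  have swap : ∑ j, ∑ k, c j k • A k j = ∑ j, ∑ k, (-c j k) • A j k := by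
    rw [Finset.sum_comm]
    exact Finset.sum_congr rfl fun j _ => Finset.sum_congr rfl fun k _ => by rw [hc]
  simp only [smul_add, Finset.sum_add_distrib, swap, neg_smul, Finset.sum_neg_distrib,
    neg_add_cancel]

section Sym3

variable {g : Type*} [LieRing g] [LieAlgebra ℂ g]

local notation "ι" => UniversalEnvelopingAlgebra.ι ℂ

theorem sym3_eq (a b c : g) :
    sym3 a b c = (6 : ℂ)⁻¹ •
      (ι a * ι b * ι c + ι a * ι c * ι b + ι b * ι a * ι c
        + ι b * ι c * ι a + ι c * ι a * ι b + ι c * ι b * ι a) := by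
  have univ_perm : (Finset.univ : Finset (Equiv.Perm (Fin 3))) =
      {⟨![0, 1, 2], ![0, 1, 2], by decide, by decide⟩, ⟨![0, 2, 1], ![0, 2, 1], by decide, by decide⟩,
        ⟨![1, 0, 2], ![1, 0, 2], by decide, by decide⟩, ⟨![1, 2, 0], ![2, 0, 1], by decide, by decide⟩,
        ⟨![2, 0, 1], ![1, 2, 0], by decide, by decide⟩, ⟨![2, 1, 0], ![2, 1, 0], by decide, by decide⟩} :=
    by decide
  rw [sym3, univ_perm, Finset.sum_insert (by decide), Finset.sum_insert (by decide),
    Finset.sum_insert (by decide), Finset.sum_insert (by decide), Finset.sum_insert (by decide),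
    Finset.sum_singleton]
  simp [List.ofFn_succ, mul_assoc]
  abel

theorem sym3_add_right (a b c c' : g) : sym3 a b (c + c') = sym3 a b c + sym3 a b c' := by
  simp only [sym3_eq, map_add, add_mul, mul_add, ← smul_add]
  abel_nf

theorem sym3_sum_smul_left {n : Type*} (s : Finset n) (f : n → ℂ) (u : n → g) (b c : g) :
    sym3 (∑ k ∈ s, f k • u k) b c = ∑ k ∈ s, f k • sym3 (u k) b c := by
  simp only [sym3_eq, map_sum, map_smul, Finset.sum_mul, Finset.mul_sum, smul_mul_assoc,
    mul_smul_comm, ← Finset.sum_add_distrib, Finset.smul_sum]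
  exact Finset.sum_congr rfl fun k _ => by module

theorem sym3_sum_smul_mid {n : Type*} (s : Finset n) (f : n → ℂ) (u : n → g) (a c : g) :
    sym3 a (∑ k ∈ s, f k • u k) c = ∑ k ∈ s, f k • sym3 a (u k) c := by
  simp only [sym3_eq, map_sum, map_smul, Finset.sum_mul, Finset.mul_sum, smul_mul_assoc,
    mul_smul_comm, ← Finset.sum_add_distrib, Finset.smul_sum]
  exact Finset.sum_congr rfl fun k _ => by module

theorem sym3_sum_smul_right {n : Type*} (s : Finset n) (f : n → ℂ) (u : n → g) (a b : g) :
    sym3 a b (∑ k ∈ s, f k • u k) = ∑ k ∈ s, f k • sym3 a b (u k) := by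
  simp only [sym3_eq, map_sum, map_smul, Finset.sum_mul, Finset.mul_sum, smul_mul_assoc,
    mul_smul_comm, ← Finset.sum_add_distrib, Finset.smul_sum]
  exact Finset.sum_congr rfl fun k _ => by module

attribute [local instance] LieRing.ofAssociativeRing in
theorem ι_lie (x y : g) : ι ⁅x, y⁆ = ι x * ι y - ι y * ι x := by
  rw [LieHom.map_lie, Ring.lie_def]

theorem ι_mul_sym3_sub_sym3_mul_ι (x a b c : g) :
    ι x * sym3 a b c - sym3 a b c * ι x
      = sym3 ⁅x, a⁆ b c + sym3 a ⁅x, b⁆ c + sym3 a b ⁅x, c⁆ := by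
  simp only [sym3_eq, ι_lie, mul_smul_comm, smul_mul_assoc, ← smul_sub, ← smul_add]
  congr 1
  noncomm_ring

theorem commute_sum_sym3_of_antisymm {m n : Type*} [Fintype m] [Fintype n]
    (S : m → g) (T : n → g) (Q : m → n → g) (x : g) (c : m → m → ℂ) (d : n → n → ℂ)
    (hc : ∀ j k, c k j = -c j k) (hd : ∀ β γ, d γ β = -d β γ)
    (hS : ∀ j, ⁅x, S j⁆ = ∑ k, c j k • S k) (hT : ∀ β, ⁅x, T β⁆ = ∑ γ, d β γ • T γ)
    (hQ : ∀ j β, ⁅x, Q j β⁆ = ∑ k, c j k • Q k β + ∑ γ, d β γ • Q j γ) :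
    Commute (ι x) (∑ j, ∑ β, sym3 (S j) (T β) (Q j β)) := by
  have spin_cancel : ∀ β, ∑ j, ∑ k,
      c j k • (sym3 (S k) (T β) (Q j β) + sym3 (S j) (T β) (Q k β)) = 0 := fun β =>
    sum_sum_smul_add_swap_eq_zero c hc fun j k => sym3 (S j) (T β) (Q k β)
  have isospin_cancel : ∀ j, ∑ β, ∑ γ,
      d β γ • (sym3 (S j) (T γ) (Q j β) + sym3 (S j) (T β) (Q j γ)) = 0 := fun j =>
    sum_sum_smul_add_swap_eq_zero d hd fun β γ => sym3 (S j) (T β) (Q j γ)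
  rw [Commute, SemiconjBy, ← sub_eq_zero]
  simp only [Finset.mul_sum, Finset.sum_mul, ← Finset.sum_sub_distrib, ι_mul_sym3_sub_sym3_mul_ι,
    hS, hT, hQ, sym3_add_right, sym3_sum_smul_left, sym3_sum_smul_mid, sym3_sum_smul_right]
  calc _ = ∑ j, ∑ β, ∑ k, c j k • (sym3 (S k) (T β) (Q j β) + sym3 (S j) (T β) (Q k β))
        + ∑ j, ∑ β, ∑ γ, d β γ • (sym3 (S j) (T γ) (Q j β) + sym3 (S j) (T β) (Q j γ)) := by
        simp only [smul_add, Finset.sum_add_distrib]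
        abel
    _ = 0 := by
        rw [Finset.sum_comm]
        simp only [spin_cancel, isospin_cancel, Finset.sum_const_zero, add_zero]

end Sym3

theorem stmt13_general {g : Type*} [LieRing g] [LieAlgebra ℂ g]
    (S T : Fin 3 → g) (Q : Fin 3 → Fin 3 → g)
    (hSS : ∀ i j, ⁅S i, S j⁆ = ∑ k, (Complex.I * eps3 i j k) • S k)
    (hTT : ∀ i j, ⁅T i, T j⁆ = ∑ k, (Complex.I * eps3 i j k) • T k)
    (hST : ∀ i j, ⁅S i, T j⁆ = 0)
    (hSQ : ∀ i j α, ⁅S i, Q j α⁆ = ∑ k, (Complex.I * eps3 i j k) • Q k α)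
    (hTQ : ∀ α i β, ⁅T α, Q i β⁆ = ∑ γ, (Complex.I * eps3 α β γ) • Q i γ) :
    (∀ i, (∑ j, ∑ α, sym3 (S j) (T α) (Q j α)) * UniversalEnvelopingAlgebra.ι ℂ (S i)
        = UniversalEnvelopingAlgebra.ι ℂ (S i) * ∑ j, ∑ α, sym3 (S j) (T α) (Q j α)) ∧
    (∀ α, (∑ j, ∑ β, sym3 (S j) (T β) (Q j β)) * UniversalEnvelopingAlgebra.ι ℂ (T α)
        = UniversalEnvelopingAlgebra.ι ℂ (T α) * ∑ j, ∑ β, sym3 (S j) (T β) (Q j β)) := by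
  have rotation_antisymm : ∀ i j k, Complex.I * eps3 i k j = -(Complex.I * eps3 i j k) :=
    fun i j k => by rw [eps3_swap_right, mul_neg]
  refine ⟨fun i => ?_, fun α => ?_⟩
  · exact (commute_sum_sym3_of_antisymm S T Q (S i) (fun j k => Complex.I * eps3 i j k) 0
      (rotation_antisymm i) (by simp) (hSS i) (by simp [hST]) (by simp [hSQ])).eq.symm
  · have hTS : ∀ j, ⁅T α, S j⁆ = 0 := fun j => by rw [← lie_skew, hST, neg_zero]
    exact (commute_sum_sym3_of_antisymm S T Q (T α) 0 (fun β γ => Complex.I * eps3 α β γ)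
      (by simp) (rotation_antisymm α) (by simp [hTS]) (hTT α) (by simp [hTQ])).eq.symm

/-- In `su(4)` in the Wigner supermultiplet basis `{S_i, T_j, Q_{iα}}`, the
symmetrized Moshinsky–Nagel operator `Ω = Sym(Σ S_iT_αQ_{iα})` commutes with every `S_i` and
every `T_α` in the universal enveloping algebra: it is a missing label operator for the
reduction `su(4) ⊃ su(2) × su(2)`. -/
theorem stmt13 {g : Type*} [LieRing g] [LieAlgebra ℂ g]
    (S T : Fin 3 → g) (Q : Fin 3 → Fin 3 → g)
    (hSS : ∀ i j, ⁅S i, S j⁆ = ∑ k, (Complex.I * eps3 i j k) • S k)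
    (hTT : ∀ i j, ⁅T i, T j⁆ = ∑ k, (Complex.I * eps3 i j k) • T k)
    (hST : ∀ i j, ⁅S i, T j⁆ = 0)
    (hSQ : ∀ i j α, ⁅S i, Q j α⁆ = ∑ k, (Complex.I * eps3 i j k) • Q k α)
    (hTQ : ∀ α i β, ⁅T α, Q i β⁆ = ∑ γ, (Complex.I * eps3 α β γ) • Q i γ)
    (hQQ : ∀ i α j β, ⁅Q i α, Q j β⁆ =
      (∑ k, (Complex.I / 4 * kdelta α β * eps3 i j k) • S k)
        + ∑ γ, (Complex.I / 4 * kdelta i j * eps3 α β γ) • T γ) :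
    (∀ i, (∑ j, ∑ α, sym3 (S j) (T α) (Q j α)) * UniversalEnvelopingAlgebra.ι ℂ (S i)
        = UniversalEnvelopingAlgebra.ι ℂ (S i) * ∑ j, ∑ α, sym3 (S j) (T α) (Q j α)) ∧
    (∀ α, (∑ j, ∑ β, sym3 (S j) (T β) (Q j β)) * UniversalEnvelopingAlgebra.ι ℂ (T α)
        = UniversalEnvelopingAlgebra.ι ℂ (T α) * ∑ j, ∑ β, sym3 (S j) (T β) (Q j β)) :=
  stmt13_general S T Q hSS hTT hST hSQ hTQ
end
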